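/- Let C be a dagger category having all (J, Ω)-shaped dagger limits and all (K, Ψ)-shaped dagger limits, where Ω and Ψ are weakly initial classes of objects of J and K, and let D : J × K ⥤ C be an adjointable bifunctor. Then the iterated dagger limit dlim^Ψ_k dlim^Ω_j D(j, k) (the (K, Ψ)-shaped dagger limit of the functor k ↦ dlim^Ω_j D(j, k)) and the iterated dagger limit dlim^Ω_j dlim^Ψ_k D(j, k), each equipped with the composite cone over D, are both dagger limits of (D, Ω × Ψ); in particular they are unitarily isomorphic. -/
import Mathlib


open CategoryTheory

universe v u v₁ u₁ v₂ u₂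

class DaggerCategory (C : Type u) [Category.{v} C] where
  dag : ∀ {A B : C}, (A ⟶ B) → (B ⟶ A)
  dag_id : ∀ (A : C), dag (𝟙 A) = 𝟙 A
  dag_comp : ∀ {A B X : C} (f : A ⟶ B) (g : B ⟶ X), dag (f ≫ g) = dag g ≫ dag f
  dag_dag : ∀ {A B : C} (f : A ⟶ B), dag (dag f) = f

postfix:max "†" => DaggerCategory.dag

section Defs

variable {C : Type u} [Category.{v} C] [DaggerCategory C]

/-- A morphism `f` is a partial isometry if `f ∘ f† ∘ f = f`. -/
def IsPartialIsometry {A B : C} (f : A ⟶ B) : Prop :=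
  f ≫ f† ≫ f = f

/-- A morphism `f : A ⟶ B` is unitary if `f† ∘ f = 𝟙 A` and `f ∘ f† = 𝟙 B`. -/
def IsUnitary {A B : C} (f : A ⟶ B) : Prop :=
  f ≫ f† = 𝟙 A ∧ f† ≫ f = 𝟙 B

/-- A morphism `f` is dagger monic (an isometry) if `f† ∘ f = 𝟙`. -/
def DaggerMonic {A B : C} (f : A ⟶ B) : Prop :=
  f ≫ f† = 𝟙 A

/-- `(L, l)` is a limit cone over the diagram `D`. -/
def IsLimitCone {J : Type u₁} [Category.{v₁} J] (D : J ⥤ C) (L : C)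
    (l : ∀ j : J, L ⟶ D.obj j) : Prop :=
  (∀ {j j' : J} (f : j ⟶ j'), l j ≫ D.map f = l j') ∧
  (∀ (M : C) (m : ∀ j : J, M ⟶ D.obj j),
    (∀ {j j' : J} (f : j ⟶ j'), m j ≫ D.map f = m j') →
    ∃! g : M ⟶ L, ∀ j : J, g ≫ l j = m j)

/-- A class of objects `Ω` is weakly initial when every object admits a morphism
from some member of `Ω`. -/
def WeaklyInitial {J : Type u₁} [Category.{v₁} J] (Ω : Set J) : Prop :=
  ∀ B : J, ∃ A ∈ Ω, Nonempty (A ⟶ B)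

/-- `(L, l)` is a dagger limit of `(D, Ω)`: a limit cone whose legs at `Ω` are
partial isometries with pairwise commuting induced projections. -/
def IsDaggerLimit {J : Type u₁} [Category.{v₁} J] (D : J ⥤ C) (Ω : Set J) (L : C)
    (l : ∀ j : J, L ⟶ D.obj j) : Prop :=
  IsLimitCone D L l ∧
  (∀ j ∈ Ω, IsPartialIsometry (l j)) ∧
  (∀ j ∈ Ω, ∀ j' ∈ Ω,
    (l j ≫ (l j)†) ≫ (l j' ≫ (l j')†) = (l j' ≫ (l j')†) ≫ (l j ≫ (l j)†))

end Defs

/-- A bifunctor `D : J × K ⥤ C` into a dagger category is adjointable when for every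
`g : k ⟶ k'` in `K` the natural transformation `D(−, g)` is adjointable, i.e. its
componentwise daggers form a natural transformation `D(−, k') ⟹ D(−, k)`. -/
def AdjointableBifunctor {C : Type u} [Category.{v} C] [DaggerCategory C]
    {J : Type u₁} [Category.{v₁} J] {K : Type u₂} [Category.{v₂} K]
    (D : J × K ⥤ C) : Prop :=
  ∀ {j j' : J} (f : j ⟶ j') {k k' : K} (g : k ⟶ k'),
    D.map ((f, 𝟙 k') : (j, k') ⟶ (j', k')) ≫ (D.map ((𝟙 j', g) : (j', k) ⟶ (j', k')))† =
    (D.map ((𝟙 j, g) : (j, k) ⟶ (j, k')))† ≫ D.map ((f, 𝟙 k) : (j, k) ⟶ (j', k))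

section CoreLemmas
set_option linter.unusedSectionVars false
open DaggerCategory

universe v₃ u₃

variable {C : Type u} [Category.{v} C] [DaggerCategory C]
variable {I : Type u₃} [Category.{v₃} I]

lemma dl_dag_proj {X Y : C} (f : X ⟶ Y) : (f ≫ f†)† = f ≫ f† := by
  rw [dag_comp, dag_dag]

lemma dl_pi_dag {X Y : C} {f : X ⟶ Y} (h : IsPartialIsometry f) :
    f† ≫ f ≫ f† = f† := by
  have h2 := congrArg (dag (C := C)) h
  simpa [dag_comp, dag_dag, Category.assoc] using h2

/-- Bare-bones presentation of a dagger limit of a diagram-like family. -/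
structure DLim (Θ : Set I) (Fo : I → C)
    (Fm : ∀ {i i' : I}, (i ⟶ i') → (Fo i ⟶ Fo i')) (L : C) (l : ∀ i : I, L ⟶ Fo i) : Prop where
  cone : ∀ {i i' : I} (f : i ⟶ i'), l i ≫ Fm f = l i'
  lim : ∀ (Y : C) (y : ∀ i : I, Y ⟶ Fo i),
    (∀ {i i' : I} (f : i ⟶ i'), y i ≫ Fm f = y i') →
    ∃! u : Y ⟶ L, ∀ i : I, u ≫ l i = y i
  pi : ∀ i ∈ Θ, IsPartialIsometry (l i)
  ind : ∀ i ∈ Θ, ∀ i' ∈ Θ,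
    (l i ≫ (l i)†) ≫ (l i' ≫ (l i')†) = (l i' ≫ (l i')†) ≫ (l i ≫ (l i)†)

lemma DLim.hom_ext {Θ : Set I} {Fo : I → C}
    {Fm : ∀ {i i' : I}, (i ⟶ i') → (Fo i ⟶ Fo i')} {L : C} {l : ∀ i : I, L ⟶ Fo i}
    (hL : DLim Θ Fo Fm L l) {Y : C} {x y : Y ⟶ L} (h : ∀ i, x ≫ l i = y ≫ l i) : x = y := by
  obtain ⟨u, hu, huniq⟩ := hL.lim Y (fun i => x ≫ l i)
    (fun {i i'} f => by rw [Category.assoc, hL.cone])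
  exact (huniq x fun i => rfl).trans (huniq y fun i => (h i).symm).symm

variable {Θ : Set I} {Fo Go : I → C}
  {Fm : ∀ {i i' : I}, (i ⟶ i') → (Fo i ⟶ Fo i')}
  {Gm : ∀ {i i' : I}, (i ⟶ i') → (Go i ⟶ Go i')}
  {L M : C} {l : ∀ i : I, L ⟶ Fo i} {m : ∀ i : I, M ⟶ Go i}
  {σ : ∀ i : I, Fo i ⟶ Go i} {E : L ⟶ M} {E' : M ⟶ L}

/-- `q_X ≫ E'† = E ≫ q̂_X`. -/
lemma lemR (hE : ∀ i, E ≫ m i = l i ≫ σ i) (hE' : ∀ i, E' ≫ l i = m i ≫ (σ i)†) (X : I) :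
    (l X ≫ (l X)†) ≫ E'† = E ≫ (m X ≫ (m X)†) := by
  have h1 : E' ≫ (l X ≫ (l X)†) = m X ≫ (σ X)† ≫ (l X)† := by
    rw [← Category.assoc, hE', Category.assoc]
  have h2 : (l X ≫ (l X)†) ≫ E'† = (E' ≫ (l X ≫ (l X)†))† := by
    rw [dag_comp, dl_dag_proj]
  rw [h2, h1]
  simp only [dag_comp, dag_dag, Category.assoc]
  rw [← Category.assoc, ← hE X, Category.assoc]

/-- The core interchange identity at a pair of `Θ`-legs. -/
lemma lemG1 (hL : DLim Θ Fo Fm L l) (hM : DLim Θ Go Gm M m)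
    (hE : ∀ i, E ≫ m i = l i ≫ σ i) (hE' : ∀ i, E' ≫ l i = m i ≫ (σ i)†)
    {A B : I} (hA : A ∈ Θ) (hB : B ∈ Θ) :
    (l A ≫ (l A)†) ≫ E ≫ m B = (E ≫ (m A ≫ (m A)†)) ≫ m B := by
  have hR := lemR (σ := σ) hE hE'
  have star2 : (l A ≫ (l A)†) ≫ E ≫ m B
      = (l B ≫ (l B)†) ≫ (E ≫ (m A ≫ (m A)†)) ≫ m B := by
    calc (l A ≫ (l A)†) ≫ E ≫ m B
        = (l A ≫ (l A)†) ≫ E ≫ (m B ≫ (m B)† ≫ m B) := by rw [hM.pi B hB]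
      _ = (l A ≫ (l A)†) ≫ (E ≫ (m B ≫ (m B)†)) ≫ m B := by
          simp only [Category.assoc]
      _ = (l A ≫ (l A)†) ≫ ((l B ≫ (l B)†) ≫ E'†) ≫ m B := by rw [hR B]
      _ = ((l A ≫ (l A)†) ≫ (l B ≫ (l B)†)) ≫ E'† ≫ m B := by
          simp only [Category.assoc]
      _ = ((l B ≫ (l B)†) ≫ (l A ≫ (l A)†)) ≫ E'† ≫ m B := by rw [hL.ind A hA B hB]
      _ = (l B ≫ (l B)†) ≫ ((l A ≫ (l A)†) ≫ E'†) ≫ m B := by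
          simp only [Category.assoc]
      _ = (l B ≫ (l B)†) ≫ (E ≫ (m A ≫ (m A)†)) ≫ m B := by rw [hR A]
  have star1 : (E ≫ (m A ≫ (m A)†)) ≫ m B
      = (l B ≫ (l B)†) ≫ (E ≫ (m A ≫ (m A)†)) ≫ m B := by
    calc (E ≫ (m A ≫ (m A)†)) ≫ m B
        = ((E ≫ m A) ≫ (m A)†) ≫ m B := by simp only [Category.assoc]
      _ = ((l A ≫ σ A) ≫ (m A)†) ≫ m B := by rw [hE A]
      _ = (((l A ≫ (l A)† ≫ l A) ≫ σ A) ≫ (m A)†) ≫ m B := by rw [hL.pi A hA]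
      _ = (l A ≫ (l A)†) ≫ ((l A ≫ σ A) ≫ (m A)†) ≫ m B := by
          simp only [Category.assoc]
      _ = (l A ≫ (l A)†) ≫ ((E ≫ m A) ≫ (m A)†) ≫ m B := by rw [hE A]
      _ = (l A ≫ (l A)†) ≫ ((E ≫ m A) ≫ (m A)†) ≫ (m B ≫ (m B)† ≫ m B) := by
          rw [hM.pi B hB]
      _ = (l A ≫ (l A)†) ≫ E ≫ ((m A ≫ (m A)†) ≫ (m B ≫ (m B)†)) ≫ m B := by
          simp only [Category.assoc]
      _ = (l A ≫ (l A)†) ≫ E ≫ ((m B ≫ (m B)†) ≫ (m A ≫ (m A)†)) ≫ m B := by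
          rw [hM.ind A hA B hB]
      _ = (l A ≫ (l A)†) ≫ (E ≫ (m B ≫ (m B)†)) ≫ (m A ≫ (m A)†) ≫ m B := by
          simp only [Category.assoc]
      _ = (l A ≫ (l A)†) ≫ ((l B ≫ (l B)†) ≫ E'†) ≫ (m A ≫ (m A)†) ≫ m B := by
          rw [hR B]
      _ = ((l A ≫ (l A)†) ≫ (l B ≫ (l B)†)) ≫ E'† ≫ (m A ≫ (m A)†) ≫ m B := by
          simp only [Category.assoc]
      _ = ((l B ≫ (l B)†) ≫ (l A ≫ (l A)†)) ≫ E'† ≫ (m A ≫ (m A)†) ≫ m B := by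
          rw [hL.ind A hA B hB]
      _ = (l B ≫ (l B)†) ≫ ((l A ≫ (l A)†) ≫ E'†) ≫ (m A ≫ (m A)†) ≫ m B := by
          simp only [Category.assoc]
      _ = (l B ≫ (l B)†) ≫ (E ≫ (m A ≫ (m A)†)) ≫ (m A ≫ (m A)†) ≫ m B := by
          rw [hR A]
      _ = (l B ≫ (l B)†) ≫ E ≫ m A ≫ ((m A)† ≫ m A ≫ (m A)†) ≫ m B := by
          simp only [Category.assoc]
      _ = (l B ≫ (l B)†) ≫ E ≫ m A ≫ (m A)† ≫ m B := by
          rw [dl_pi_dag (hM.pi A hA)]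
      _ = (l B ≫ (l B)†) ≫ (E ≫ (m A ≫ (m A)†)) ≫ m B := by
          simp only [Category.assoc]
  rw [star2, ← star1]

/-- Projection naturality: `q_A ≫ E = E ≫ q̂_A`. -/
lemma lemN (hΘ : WeaklyInitial Θ) (hL : DLim Θ Fo Fm L l) (hM : DLim Θ Go Gm M m)
    (hE : ∀ i, E ≫ m i = l i ≫ σ i) (hE' : ∀ i, E' ≫ l i = m i ≫ (σ i)†)
    {A : I} (hA : A ∈ Θ) :
    (l A ≫ (l A)†) ≫ E = E ≫ (m A ≫ (m A)†) := by
  apply hM.hom_ext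
  intro i
  obtain ⟨B, hB, ⟨f⟩⟩ := hΘ i
  have h := lemG1 hL hM hE hE' hA hB
  calc ((l A ≫ (l A)†) ≫ E) ≫ m i
      = ((l A ≫ (l A)†) ≫ E ≫ m B) ≫ Gm f := by
        rw [← hM.cone f]; simp only [Category.assoc]
    _ = ((E ≫ (m A ≫ (m A)†)) ≫ m B) ≫ Gm f := by rw [h]
    _ = (E ≫ (m A ≫ (m A)†)) ≫ m i := by
        rw [← hM.cone f]; simp only [Category.assoc]

/-- Diagonal entry naturality: `t_A ≫ σ_A = σ_A ≫ t̂_A`. -/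
lemma lemDiag (hL : DLim Θ Fo Fm L l) (hM : DLim Θ Go Gm M m)
    (hE : ∀ i, E ≫ m i = l i ≫ σ i) (hE' : ∀ i, E' ≫ l i = m i ≫ (σ i)†)
    {A : I} (hA : A ∈ Θ) :
    ((l A)† ≫ l A) ≫ σ A = σ A ≫ ((m A)† ≫ m A) := by
  have D1 : (l A)† ≫ l A ≫ σ A ≫ (m A)† ≫ m A = (l A)† ≫ l A ≫ σ A := by
    rw [← reassoc_of% (hE A), hM.pi A hA, hE A]
  have D2' : m A ≫ (σ A)† ≫ (l A)† ≫ l A = m A ≫ (σ A)† := by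
    rw [← reassoc_of% (hE' A), hL.pi A hA, hE' A]
  have D2 := congrArg (dag (C := C)) D2'
  simp only [dag_comp, dag_dag, Category.assoc] at D2
  calc ((l A)† ≫ l A) ≫ σ A
      = (l A)† ≫ l A ≫ σ A ≫ (m A)† ≫ m A := by rw [D1]; simp only [Category.assoc]
    _ = ((l A)† ≫ l A ≫ σ A ≫ (m A)†) ≫ m A := by simp only [Category.assoc]
    _ = (σ A ≫ (m A)†) ≫ m A := by rw [D2]
    _ = σ A ≫ ((m A)† ≫ m A) := by simp only [Category.assoc]

/-- Full entry naturality. -/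
lemma lemCI (hΘ : WeaklyInitial Θ) (hL : DLim Θ Fo Fm L l) (hM : DLim Θ Go Gm M m)
    (hE : ∀ i, E ≫ m i = l i ≫ σ i) (hE' : ∀ i, E' ≫ l i = m i ≫ (σ i)†)
    {A B : I} (hA : A ∈ Θ) (hB : B ∈ Θ) :
    (l A)† ≫ l B ≫ σ B = σ A ≫ (m A)† ≫ m B := by
  have hN := lemN hΘ hL hM hE hE' hA
  calc (l A)† ≫ l B ≫ σ B
      = (l A)† ≫ E ≫ m B := by rw [← hE B]
    _ = ((l A)† ≫ l A ≫ (l A)†) ≫ E ≫ m B := by rw [dl_pi_dag (hL.pi A hA)]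
    _ = (l A)† ≫ ((l A ≫ (l A)†) ≫ E) ≫ m B := by simp only [Category.assoc]
    _ = (l A)† ≫ (E ≫ (m A ≫ (m A)†)) ≫ m B := by rw [hN]
    _ = (l A)† ≫ (E ≫ m A) ≫ (m A)† ≫ m B := by simp only [Category.assoc]
    _ = (l A)† ≫ (l A ≫ σ A) ≫ (m A)† ≫ m B := by rw [hE A]
    _ = (((l A)† ≫ l A) ≫ σ A) ≫ (m A)† ≫ m B := by simp only [Category.assoc]
    _ = (σ A ≫ ((m A)† ≫ m A)) ≫ (m A)† ≫ m B := by rw [lemDiag hL hM hE hE' hA]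
    _ = σ A ≫ ((m A)† ≫ m A ≫ (m A)†) ≫ m B := by simp only [Category.assoc]
    _ = σ A ≫ (m A)† ≫ m B := by rw [dl_pi_dag (hM.pi A hA)]

/-- The dagger of the induced morphism is the induced morphism of the daggers. -/
lemma lemKey (hΘ : WeaklyInitial Θ) (hL : DLim Θ Fo Fm L l) (hM : DLim Θ Go Gm M m)
    (hσd : ∀ {i i' : I} (f : i ⟶ i'), Gm f ≫ (σ i')† = (σ i)† ≫ Fm f)
    (hE : ∀ i, E ≫ m i = l i ≫ σ i) (hE' : ∀ i, E' ≫ l i = m i ≫ (σ i)†) :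
    E† = E' := by
  have hstep : ∀ X ∈ Θ, (l X)† ≫ E = σ X ≫ (m X)† := by
    intro X hX
    apply hM.hom_ext
    intro i
    obtain ⟨B, hB, ⟨f⟩⟩ := hΘ i
    have h := lemCI hΘ hL hM hE hE' hX hB
    calc ((l X)† ≫ E) ≫ m i = ((l X)† ≫ E ≫ m B) ≫ Gm f := by
          rw [← hM.cone f]; simp only [Category.assoc]
      _ = ((l X)† ≫ l B ≫ σ B) ≫ Gm f := by rw [hE B]
      _ = (σ X ≫ (m X)† ≫ m B) ≫ Gm f := by rw [h]
      _ = (σ X ≫ (m X)†) ≫ m i := by rw [← hM.cone f]; simp only [Category.assoc]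
  apply hL.hom_ext
  intro i
  obtain ⟨X, hX, ⟨f⟩⟩ := hΘ i
  have hX2 : E† ≫ l X = m X ≫ (σ X)† := by
    have h3 := congrArg (dag (C := C)) (hstep X hX)
    simpa [dag_comp, dag_dag] using h3
  calc E† ≫ l i = (E† ≫ l X) ≫ Fm f := by rw [← hL.cone f]; simp only [Category.assoc]
    _ = m X ≫ (σ X)† ≫ Fm f := by rw [hX2]; simp only [Category.assoc]
    _ = m X ≫ Gm f ≫ (σ i)† := by rw [hσd f]
    _ = m i ≫ (σ i)† := by rw [← Category.assoc, hM.cone f]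
    _ = E' ≫ l i := (hE' i).symm

end CoreLemmas

/-- Suppose `C` has all `(J, Ω)`-shaped and all `(K, Ψ)`-shaped dagger
limits and `D : J × K ⥤ C` is an adjointable bifunctor.  Let `(Lk k, lk k)` be dagger limits
of the diagrams `D(−, k)` relative to `Ω`, with the induced connecting maps `Em`, and let
`(M, mk)` be a dagger limit relative to `Ψ` of the resulting diagram `k ↦ dlim^Ω_j D(j, k)`;
symmetrically let `(Rj j, rj j)` be dagger limits of `D(j, −)` relative to `Ψ`, with
connecting maps `Fn`, and `(N, nj)` a dagger limit relative to `Ω` of `j ↦ dlim^Ψ_k D(j, k)`.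
Then both iterated limits, equipped with their composite cones, are dagger limits of
`(D, Ω × Ψ)`; in particular they are unitarily isomorphic (as cones). -/
theorem daggerLimits_commute {C : Type u} [Category.{v} C] [DaggerCategory C]
    {J : Type u₁} [Category.{v₁} J] {K : Type u₂} [Category.{v₂} K]
    (Ω : Set J) (Ψ : Set K) (hΩ : WeaklyInitial Ω) (hΨ : WeaklyInitial Ψ)
    (hJ : ∀ F : J ⥤ C, ∃ (L : C) (l : ∀ j : J, L ⟶ F.obj j), IsDaggerLimit F Ω L l)
    (hK : ∀ F : K ⥤ C, ∃ (L : C) (l : ∀ k : K, L ⟶ F.obj k), IsDaggerLimit F Ψ L l)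
    (D : J × K ⥤ C) (hD : AdjointableBifunctor D)
    -- dagger limits over `J` first:
    (Lk : K → C) (lk : ∀ (k : K) (j : J), Lk k ⟶ D.obj (j, k))
    (hlk_cone : ∀ (k : K) {j j' : J} (f : j ⟶ j'),
      lk k j ≫ D.map ((f, 𝟙 k) : (j, k) ⟶ (j', k)) = lk k j')
    (hlk_lim : ∀ (k : K) (Y : C) (y : ∀ j : J, Y ⟶ D.obj (j, k)),
      (∀ {j j' : J} (f : j ⟶ j'), y j ≫ D.map ((f, 𝟙 k) : (j, k) ⟶ (j', k)) = y j') →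
      ∃! u : Y ⟶ Lk k, ∀ j : J, u ≫ lk k j = y j)
    (hlk_norm : ∀ (k : K), ∀ j ∈ Ω, IsPartialIsometry (lk k j))
    (hlk_indep : ∀ (k : K), ∀ j ∈ Ω, ∀ j' ∈ Ω,
      (lk k j ≫ (lk k j)†) ≫ (lk k j' ≫ (lk k j')†) =
      (lk k j' ≫ (lk k j')†) ≫ (lk k j ≫ (lk k j)†))
    (Em : ∀ {k k' : K}, (k ⟶ k') → (Lk k ⟶ Lk k'))
    (hEm : ∀ {k k' : K} (g : k ⟶ k') (j : J),
      Em g ≫ lk k' j = lk k j ≫ D.map ((𝟙 j, g) : (j, k) ⟶ (j, k')))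
    -- then the dagger limit over `K`:
    (M : C) (mk : ∀ k : K, M ⟶ Lk k)
    (hmk_cone : ∀ {k k' : K} (g : k ⟶ k'), mk k ≫ Em g = mk k')
    (hmk_lim : ∀ (Y : C) (y : ∀ k : K, Y ⟶ Lk k),
      (∀ {k k' : K} (g : k ⟶ k'), y k ≫ Em g = y k') →
      ∃! u : Y ⟶ M, ∀ k : K, u ≫ mk k = y k)
    (hmk_norm : ∀ k ∈ Ψ, IsPartialIsometry (mk k))
    (hmk_indep : ∀ k ∈ Ψ, ∀ k' ∈ Ψ,
      (mk k ≫ (mk k)†) ≫ (mk k' ≫ (mk k')†) =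
      (mk k' ≫ (mk k')†) ≫ (mk k ≫ (mk k)†))
    -- dagger limits over `K` first:
    (Rj : J → C) (rj : ∀ (j : J) (k : K), Rj j ⟶ D.obj (j, k))
    (hrj_cone : ∀ (j : J) {k k' : K} (g : k ⟶ k'),
      rj j k ≫ D.map ((𝟙 j, g) : (j, k) ⟶ (j, k')) = rj j k')
    (hrj_lim : ∀ (j : J) (Y : C) (y : ∀ k : K, Y ⟶ D.obj (j, k)),
      (∀ {k k' : K} (g : k ⟶ k'), y k ≫ D.map ((𝟙 j, g) : (j, k) ⟶ (j, k')) = y k') →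
      ∃! u : Y ⟶ Rj j, ∀ k : K, u ≫ rj j k = y k)
    (hrj_norm : ∀ (j : J), ∀ k ∈ Ψ, IsPartialIsometry (rj j k))
    (hrj_indep : ∀ (j : J), ∀ k ∈ Ψ, ∀ k' ∈ Ψ,
      (rj j k ≫ (rj j k)†) ≫ (rj j k' ≫ (rj j k')†) =
      (rj j k' ≫ (rj j k')†) ≫ (rj j k ≫ (rj j k)†))
    (Fn : ∀ {j j' : J}, (j ⟶ j') → (Rj j ⟶ Rj j'))
    (hFn : ∀ {j j' : J} (f : j ⟶ j') (k : K),
      Fn f ≫ rj j' k = rj j k ≫ D.map ((f, 𝟙 k) : (j, k) ⟶ (j', k)))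
    -- then the dagger limit over `J`:
    (N : C) (nj : ∀ j : J, N ⟶ Rj j)
    (hnj_cone : ∀ {j j' : J} (f : j ⟶ j'), nj j ≫ Fn f = nj j')
    (hnj_lim : ∀ (Y : C) (y : ∀ j : J, Y ⟶ Rj j),
      (∀ {j j' : J} (f : j ⟶ j'), y j ≫ Fn f = y j') →
      ∃! u : Y ⟶ N, ∀ j : J, u ≫ nj j = y j)
    (hnj_norm : ∀ j ∈ Ω, IsPartialIsometry (nj j))
    (hnj_indep : ∀ j ∈ Ω, ∀ j' ∈ Ω,
      (nj j ≫ (nj j)†) ≫ (nj j' ≫ (nj j')†) =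
      (nj j' ≫ (nj j')†) ≫ (nj j ≫ (nj j)†)) :
    IsDaggerLimit D (Ω ×ˢ Ψ) M (fun p => mk p.2 ≫ lk p.2 p.1) ∧
    IsDaggerLimit D (Ω ×ˢ Ψ) N (fun p => nj p.1 ≫ rj p.1 p.2) ∧
    ∃ u : M ⟶ N, IsUnitary u ∧
      ∀ p : J × K, u ≫ (nj p.1 ≫ rj p.1 p.2) = mk p.2 ≫ lk p.2 p.1 := by
    classical
  clear hJ hK
  -- package the given dagger limits
  have hLk : ∀ k : K, DLim Ω (fun j => D.obj (j, k))
      (fun {j j'} (f : j ⟶ j') => D.map ((f, 𝟙 k) : (j, k) ⟶ (j', k))) (Lk k) (lk k) :=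
    fun k => ⟨hlk_cone k, hlk_lim k, hlk_norm k, hlk_indep k⟩
  have hMK : DLim Ψ Lk (fun {k k'} (g : k ⟶ k') => Em g) M mk :=
    ⟨fun {k k'} g => hmk_cone g, hmk_lim, hmk_norm, hmk_indep⟩
  have hRj : ∀ j : J, DLim Ψ (fun k => D.obj (j, k))
      (fun {k k'} (g : k ⟶ k') => D.map ((𝟙 j, g) : (j, k) ⟶ (j, k'))) (Rj j) (rj j) :=
    fun j => ⟨hrj_cone j, hrj_lim j, hrj_norm j, hrj_indep j⟩
  have hNJ : DLim Ω Rj (fun {j j'} (f : j ⟶ j') => Fn f) N nj :=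
    ⟨fun {j j'} f => hnj_cone f, hnj_lim, hnj_norm, hnj_indep⟩
  -- dagger of the adjointability condition
  have hD' : ∀ {j j' : J} (f : j ⟶ j') {k k' : K} (g : k ⟶ k'),
      D.map ((𝟙 j', g) : (j', k) ⟶ (j', k')) ≫ (D.map ((f, 𝟙 k') : (j, k') ⟶ (j', k')))† =
      (D.map ((f, 𝟙 k) : (j, k) ⟶ (j', k)))† ≫ D.map ((𝟙 j, g) : (j, k) ⟶ (j, k')) := by
    intro j j' f k k' g
    have h := congrArg (DaggerCategory.dag (C := C)) (hD f g)
    simpa [DaggerCategory.dag_comp, DaggerCategory.dag_dag] using h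
  -- backwards connecting maps on the J-side
  have hEm'ex : ∀ (k k' : K) (g : k ⟶ k'), ∃ E' : Lk k' ⟶ Lk k,
      ∀ j, E' ≫ lk k j = lk k' j ≫ (D.map ((𝟙 j, g) : (j, k) ⟶ (j, k')))† := by
    intro k k' g
    obtain ⟨E', hE', -⟩ := hlk_lim k (Lk k')
      (fun j => lk k' j ≫ (D.map ((𝟙 j, g) : (j, k) ⟶ (j, k')))†)
      (fun {j j'} f => by
        rw [Category.assoc, ← hD f g, ← Category.assoc, hlk_cone k' f])
    exact ⟨E', hE'⟩
  choose Em' hEm' using hEm'ex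
  -- projection naturality on the J-side
  have hq : ∀ (A : J), A ∈ Ω → ∀ (k k' : K) (g : k ⟶ k'),
      (lk k A ≫ (lk k A)†) ≫ Em g = Em g ≫ (lk k' A ≫ (lk k' A)†) := by
    intro A hA k k' g
    exact lemN (σ := fun j => D.map ((𝟙 j, g) : (j, k) ⟶ (j, k'))) hΩ (hLk k) (hLk k')
      (fun j => hEm g j) (hEm' k k' g) hA
  -- self-adjoint idempotents on M induced by the J-side projections
  have hehex : ∀ (A : J), A ∈ Ω → ∃ e : M ⟶ M,
      (∀ k, e ≫ mk k = mk k ≫ (lk k A ≫ (lk k A)†)) ∧ e† = e := by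
    intro A hA
    obtain ⟨e, he, -⟩ := hmk_lim M (fun k => mk k ≫ (lk k A ≫ (lk k A)†))
      (fun {k k'} g => by
        rw [Category.assoc, hq A hA k k' g, ← Category.assoc, hmk_cone g])
    refine ⟨e, he, ?_⟩
    exact lemKey (σ := fun k => lk k A ≫ (lk k A)†) hΨ hMK hMK
      (fun {k k'} g => by rw [dl_dag_proj, dl_dag_proj]; exact (hq A hA k k' g).symm)
      he (fun k => by rw [dl_dag_proj]; exact he k)
  choose eh heh hehsa using hehex
  -- the composite cone of M
  have cone_c : ∀ {p p' : J × K} (φ : p ⟶ p'),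
      (mk p.2 ≫ lk p.2 p.1) ≫ D.map φ = mk p'.2 ≫ lk p'.2 p'.1 := by
    rintro ⟨j, k⟩ ⟨j', k'⟩ ⟨f, g⟩
    dsimp only at f g ⊢
    have hsplit : (D.map ((f, g) : (j, k) ⟶ (j', k'))) =
        D.map ((f, 𝟙 k) : (j, k) ⟶ (j', k)) ≫ D.map ((𝟙 j', g) : (j', k) ⟶ (j', k')) := by
      rw [← D.map_comp]
      congr 1
      exact Prod.ext (by simp) (by simp)
    show (mk k ≫ lk k j) ≫ D.map ((f, g) : (j, k) ⟶ (j', k')) = mk k' ≫ lk k' j'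
    rw [hsplit, Category.assoc, ← Category.assoc (lk k j), hlk_cone k f, ← hEm g j',
      ← Category.assoc, hmk_cone g]
  have lim_c : ∀ (Y : C) (y : ∀ p : J × K, Y ⟶ D.obj p),
      (∀ {p p' : J × K} (φ : p ⟶ p'), y p ≫ D.map φ = y p') →
      ∃! u : Y ⟶ M, ∀ p : J × K, u ≫ (mk p.2 ≫ lk p.2 p.1) = y p := by
    intro Y y hy
    have hexu : ∀ k, ∃! u : Y ⟶ Lk k, ∀ j, u ≫ lk k j = y (j, k) := fun k =>
      hlk_lim k Y (fun j => y (j, k)) (fun {j j'} f => hy ((f, 𝟙 k) : (j, k) ⟶ (j', k)))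
    have hu : ∀ k, ∀ j, (hexu k).exists.choose ≫ lk k j = y (j, k) := fun k =>
      (hexu k).exists.choose_spec
    have hucone : ∀ {k k'} (g : k ⟶ k'),
        (hexu k).exists.choose ≫ Em g = (hexu k').exists.choose := by
      intro k k' g
      refine (hexu k').unique (fun j => ?_) (hu k')
      rw [Category.assoc, hEm g j, ← Category.assoc, hu k j, hy ((𝟙 j, g) : (j, k) ⟶ (j, k'))]
    obtain ⟨v, hv, hvu⟩ := hmk_lim Y (fun k => (hexu k).exists.choose) hucone
    refine ⟨v, ?_, ?_⟩
    · rintro ⟨j, k⟩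
      show v ≫ (mk k ≫ lk k j) = y (j, k)
      rw [← Category.assoc, hv k, hu k j]
    · intro w hw
      refine hvu w (fun k => (hexu k).unique (fun j => ?_) (hu k))
      rw [Category.assoc]
      exact hw (j, k)
  -- normalisation of the composite legs of M
  have pi_c : ∀ p ∈ Ω ×ˢ Ψ, IsPartialIsometry (mk p.2 ≫ lk p.2 p.1) := by
    rintro ⟨j, k⟩ ⟨hj, hk⟩
    show (mk k ≫ lk k j) ≫ (mk k ≫ lk k j)† ≫ (mk k ≫ lk k j) = mk k ≫ lk k j
    rw [DaggerCategory.dag_comp]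
    calc (mk k ≫ lk k j) ≫ ((lk k j)† ≫ (mk k)†) ≫ mk k ≫ lk k j
        = (mk k ≫ (lk k j ≫ (lk k j)†)) ≫ (mk k)† ≫ mk k ≫ lk k j := by
          simp only [Category.assoc]
      _ = (eh j hj ≫ mk k) ≫ (mk k)† ≫ mk k ≫ lk k j := by rw [heh j hj k]
      _ = eh j hj ≫ (mk k ≫ (mk k)† ≫ mk k) ≫ lk k j := by simp only [Category.assoc]
      _ = eh j hj ≫ mk k ≫ lk k j := by rw [hmk_norm k hk]
      _ = (mk k ≫ (lk k j ≫ (lk k j)†)) ≫ lk k j := by rw [← Category.assoc, heh j hj k]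
      _ = mk k ≫ (lk k j ≫ (lk k j)† ≫ lk k j) := by simp only [Category.assoc]
      _ = mk k ≫ lk k j := by rw [hlk_norm k j hj]
  -- independence of the composite legs of M
  have hP : ∀ (j : J) (hj : j ∈ Ω) (k : K),
      (mk k ≫ lk k j) ≫ (mk k ≫ lk k j)† = eh j hj ≫ (mk k ≫ (mk k)†) := by
    intro j hj k
    rw [DaggerCategory.dag_comp]
    calc (mk k ≫ lk k j) ≫ (lk k j)† ≫ (mk k)†
        = (mk k ≫ (lk k j ≫ (lk k j)†)) ≫ (mk k)† := by simp only [Category.assoc]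
      _ = (eh j hj ≫ mk k) ≫ (mk k)† := by rw [heh j hj k]
      _ = eh j hj ≫ (mk k ≫ (mk k)†) := by simp only [Category.assoc]
  have hcomm1 : ∀ (j : J) (hj : j ∈ Ω) (k : K),
      (mk k ≫ (mk k)†) ≫ eh j hj = eh j hj ≫ (mk k ≫ (mk k)†) := by
    intro j hj k
    have hX : eh j hj ≫ (mk k ≫ (mk k)†) = mk k ≫ (lk k j ≫ (lk k j)†) ≫ (mk k)† := by
      rw [← Category.assoc, heh j hj k, Category.assoc]
    have hXd : (eh j hj ≫ (mk k ≫ (mk k)†))† = eh j hj ≫ (mk k ≫ (mk k)†) := by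
      rw [hX]
      simp only [DaggerCategory.dag_comp, DaggerCategory.dag_dag, Category.assoc]
    calc (mk k ≫ (mk k)†) ≫ eh j hj
        = ((mk k ≫ (mk k)†) ≫ eh j hj)†† := by rw [DaggerCategory.dag_dag]
      _ = ((eh j hj)† ≫ (mk k ≫ (mk k)†)†)† := by rw [DaggerCategory.dag_comp]
      _ = (eh j hj ≫ (mk k ≫ (mk k)†))† := by rw [hehsa j hj, dl_dag_proj]
      _ = eh j hj ≫ (mk k ≫ (mk k)†) := hXd
  have hcomm2 : ∀ (j : J) (hj : j ∈ Ω) (j' : J) (hj' : j' ∈ Ω),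
      eh j hj ≫ eh j' hj' = eh j' hj' ≫ eh j hj := by
    intro j hj j' hj'
    apply hMK.hom_ext
    intro k
    calc (eh j hj ≫ eh j' hj') ≫ mk k
        = eh j hj ≫ (eh j' hj' ≫ mk k) := by simp only [Category.assoc]
      _ = (eh j hj ≫ mk k) ≫ (lk k j' ≫ (lk k j')†) := by
          rw [heh j' hj' k]; simp only [Category.assoc]
      _ = mk k ≫ (lk k j ≫ (lk k j)†) ≫ (lk k j' ≫ (lk k j')†) := by
          rw [heh j hj k]; simp only [Category.assoc]
      _ = mk k ≫ (lk k j' ≫ (lk k j')†) ≫ (lk k j ≫ (lk k j)†) := by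
          rw [hlk_indep k j hj j' hj']
      _ = (mk k ≫ (lk k j' ≫ (lk k j')†)) ≫ (lk k j ≫ (lk k j)†) := by
          simp only [Category.assoc]
      _ = (eh j' hj' ≫ mk k) ≫ (lk k j ≫ (lk k j)†) := by rw [heh j' hj' k]
      _ = eh j' hj' ≫ (eh j hj ≫ mk k) := by rw [heh j hj k, Category.assoc]
      _ = (eh j' hj' ≫ eh j hj) ≫ mk k := by simp only [Category.assoc]
  have ind_c : ∀ p ∈ Ω ×ˢ Ψ, ∀ p' ∈ Ω ×ˢ Ψ,
      ((mk p.2 ≫ lk p.2 p.1) ≫ (mk p.2 ≫ lk p.2 p.1)†) ≫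
        ((mk p'.2 ≫ lk p'.2 p'.1) ≫ (mk p'.2 ≫ lk p'.2 p'.1)†) =
      ((mk p'.2 ≫ lk p'.2 p'.1) ≫ (mk p'.2 ≫ lk p'.2 p'.1)†) ≫
        ((mk p.2 ≫ lk p.2 p.1) ≫ (mk p.2 ≫ lk p.2 p.1)†) := by
    rintro ⟨j, k⟩ ⟨hj, hk⟩ ⟨j', k'⟩ ⟨hj', hk'⟩
    show ((mk k ≫ lk k j) ≫ (mk k ≫ lk k j)†) ≫
        ((mk k' ≫ lk k' j') ≫ (mk k' ≫ lk k' j')†) = _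
    rw [hP j hj k, hP j' hj' k']
    calc (eh j hj ≫ (mk k ≫ (mk k)†)) ≫ (eh j' hj' ≫ (mk k' ≫ (mk k')†))
        = eh j hj ≫ ((mk k ≫ (mk k)†) ≫ eh j' hj') ≫ (mk k' ≫ (mk k')†) := by
          simp only [Category.assoc]
      _ = eh j hj ≫ (eh j' hj' ≫ (mk k ≫ (mk k)†)) ≫ (mk k' ≫ (mk k')†) := by
          rw [hcomm1 j' hj' k]
      _ = (eh j hj ≫ eh j' hj') ≫ (mk k ≫ (mk k)†) ≫ (mk k' ≫ (mk k')†) := by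
          simp only [Category.assoc]
      _ = (eh j' hj' ≫ eh j hj) ≫ (mk k' ≫ (mk k')†) ≫ (mk k ≫ (mk k)†) := by
          rw [hcomm2 j hj j' hj', hmk_indep k hk k' hk']
      _ = eh j' hj' ≫ ((eh j hj ≫ (mk k' ≫ (mk k')†)) ≫ (mk k ≫ (mk k)†)) := by
          simp only [Category.assoc]
      _ = eh j' hj' ≫ (((mk k' ≫ (mk k')†) ≫ eh j hj) ≫ (mk k ≫ (mk k)†)) := by
          rw [hcomm1 j hj k']
      _ = (eh j' hj' ≫ (mk k' ≫ (mk k')†)) ≫ (eh j hj ≫ (mk k ≫ (mk k)†)) := by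
          simp only [Category.assoc]
  have hMfull : IsDaggerLimit D (Ω ×ˢ Ψ) M (fun p => mk p.2 ≫ lk p.2 p.1) :=
    ⟨⟨fun {p p'} φ => cone_c φ, lim_c⟩, pi_c, ind_c⟩
  -- ===== N-side (mirror) =====
  have hFn'ex : ∀ (j j' : J) (f : j ⟶ j'), ∃ F' : Rj j' ⟶ Rj j,
      ∀ k, F' ≫ rj j k = rj j' k ≫ (D.map ((f, 𝟙 k) : (j, k) ⟶ (j', k)))† := by
    intro j j' f
    obtain ⟨F', hF', -⟩ := hrj_lim j (Rj j')
      (fun k => rj j' k ≫ (D.map ((f, 𝟙 k) : (j, k) ⟶ (j', k)))†)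
      (fun {k k'} g => by
        rw [Category.assoc, ← hD' f g, ← Category.assoc, hrj_cone j' g])
    exact ⟨F', hF'⟩
  choose Fn' hFn' using hFn'ex
  have hq' : ∀ (A : K), A ∈ Ψ → ∀ (j j' : J) (f : j ⟶ j'),
      (rj j A ≫ (rj j A)†) ≫ Fn f = Fn f ≫ (rj j' A ≫ (rj j' A)†) := by
    intro A hA j j' f
    exact lemN (σ := fun k => D.map ((f, 𝟙 k) : (j, k) ⟶ (j', k))) hΨ (hRj j) (hRj j')
      (fun k => hFn f k) (hFn' j j' f) hA
  have hfhex : ∀ (A : K), A ∈ Ψ → ∃ e : N ⟶ N,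
      (∀ j, e ≫ nj j = nj j ≫ (rj j A ≫ (rj j A)†)) ∧ e† = e := by
    intro A hA
    obtain ⟨e, he, -⟩ := hnj_lim N (fun j => nj j ≫ (rj j A ≫ (rj j A)†))
      (fun {j j'} f => by
        rw [Category.assoc, hq' A hA j j' f, ← Category.assoc, hnj_cone f])
    refine ⟨e, he, ?_⟩
    exact lemKey (σ := fun j => rj j A ≫ (rj j A)†) hΩ hNJ hNJ
      (fun {j j'} f => by rw [dl_dag_proj, dl_dag_proj]; exact (hq' A hA j j' f).symm)
      he (fun j => by rw [dl_dag_proj]; exact he j)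
  choose fh hfh hfhsa using hfhex
  have cone_d : ∀ {p p' : J × K} (φ : p ⟶ p'),
      (nj p.1 ≫ rj p.1 p.2) ≫ D.map φ = nj p'.1 ≫ rj p'.1 p'.2 := by
    rintro ⟨j, k⟩ ⟨j', k'⟩ ⟨f, g⟩
    dsimp only at f g ⊢
    have hsplit : (D.map ((f, g) : (j, k) ⟶ (j', k'))) =
        D.map ((f, 𝟙 k) : (j, k) ⟶ (j', k)) ≫ D.map ((𝟙 j', g) : (j', k) ⟶ (j', k')) := by
      rw [← D.map_comp]
      congr 1
      exact Prod.ext (by simp) (by simp)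
    show (nj j ≫ rj j k) ≫ D.map ((f, g) : (j, k) ⟶ (j', k')) = nj j' ≫ rj j' k'
    rw [hsplit, Category.assoc, ← Category.assoc (rj j k), ← hFn f k, Category.assoc,
      ← Category.assoc, hnj_cone f, hrj_cone j' g]
  have lim_d : ∀ (Y : C) (y : ∀ p : J × K, Y ⟶ D.obj p),
      (∀ {p p' : J × K} (φ : p ⟶ p'), y p ≫ D.map φ = y p') →
      ∃! u : Y ⟶ N, ∀ p : J × K, u ≫ (nj p.1 ≫ rj p.1 p.2) = y p := by
    intro Y y hy
    have hexu : ∀ j, ∃! u : Y ⟶ Rj j, ∀ k, u ≫ rj j k = y (j, k) := fun j =>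
      hrj_lim j Y (fun k => y (j, k)) (fun {k k'} g => hy ((𝟙 j, g) : (j, k) ⟶ (j, k')))
    have hu : ∀ j, ∀ k, (hexu j).exists.choose ≫ rj j k = y (j, k) := fun j =>
      (hexu j).exists.choose_spec
    have hucone : ∀ {j j'} (f : j ⟶ j'),
        (hexu j).exists.choose ≫ Fn f = (hexu j').exists.choose := by
      intro j j' f
      refine (hexu j').unique (fun k => ?_) (hu j')
      rw [Category.assoc, hFn f k, ← Category.assoc, hu j k, hy ((f, 𝟙 k) : (j, k) ⟶ (j', k))]
    obtain ⟨v, hv, hvu⟩ := hnj_lim Y (fun j => (hexu j).exists.choose) hucone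
    refine ⟨v, ?_, ?_⟩
    · rintro ⟨j, k⟩
      show v ≫ (nj j ≫ rj j k) = y (j, k)
      rw [← Category.assoc, hv j, hu j k]
    · intro w hw
      refine hvu w (fun j => (hexu j).unique (fun k => ?_) (hu j))
      rw [Category.assoc]
      exact hw (j, k)
  have pi_d : ∀ p ∈ Ω ×ˢ Ψ, IsPartialIsometry (nj p.1 ≫ rj p.1 p.2) := by
    rintro ⟨j, k⟩ ⟨hj, hk⟩
    show (nj j ≫ rj j k) ≫ (nj j ≫ rj j k)† ≫ (nj j ≫ rj j k) = nj j ≫ rj j k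
    rw [DaggerCategory.dag_comp]
    calc (nj j ≫ rj j k) ≫ ((rj j k)† ≫ (nj j)†) ≫ nj j ≫ rj j k
        = (nj j ≫ (rj j k ≫ (rj j k)†)) ≫ (nj j)† ≫ nj j ≫ rj j k := by
          simp only [Category.assoc]
      _ = (fh k hk ≫ nj j) ≫ (nj j)† ≫ nj j ≫ rj j k := by rw [hfh k hk j]
      _ = fh k hk ≫ (nj j ≫ (nj j)† ≫ nj j) ≫ rj j k := by simp only [Category.assoc]
      _ = fh k hk ≫ nj j ≫ rj j k := by rw [hnj_norm j hj]
      _ = (nj j ≫ (rj j k ≫ (rj j k)†)) ≫ rj j k := by rw [← Category.assoc, hfh k hk j]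
      _ = nj j ≫ (rj j k ≫ (rj j k)† ≫ rj j k) := by simp only [Category.assoc]
      _ = nj j ≫ rj j k := by rw [hrj_norm j k hk]
  have hP' : ∀ (k : K) (hk : k ∈ Ψ) (j : J),
      (nj j ≫ rj j k) ≫ (nj j ≫ rj j k)† = fh k hk ≫ (nj j ≫ (nj j)†) := by
    intro k hk j
    rw [DaggerCategory.dag_comp]
    calc (nj j ≫ rj j k) ≫ (rj j k)† ≫ (nj j)†
        = (nj j ≫ (rj j k ≫ (rj j k)†)) ≫ (nj j)† := by simp only [Category.assoc]
      _ = (fh k hk ≫ nj j) ≫ (nj j)† := by rw [hfh k hk j]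
      _ = fh k hk ≫ (nj j ≫ (nj j)†) := by simp only [Category.assoc]
  have hcomm1' : ∀ (k : K) (hk : k ∈ Ψ) (j : J),
      (nj j ≫ (nj j)†) ≫ fh k hk = fh k hk ≫ (nj j ≫ (nj j)†) := by
    intro k hk j
    have hX : fh k hk ≫ (nj j ≫ (nj j)†) = nj j ≫ (rj j k ≫ (rj j k)†) ≫ (nj j)† := by
      rw [← Category.assoc, hfh k hk j, Category.assoc]
    have hXd : (fh k hk ≫ (nj j ≫ (nj j)†))† = fh k hk ≫ (nj j ≫ (nj j)†) := by
      rw [hX]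
      simp only [DaggerCategory.dag_comp, DaggerCategory.dag_dag, Category.assoc]
    calc (nj j ≫ (nj j)†) ≫ fh k hk
        = ((nj j ≫ (nj j)†) ≫ fh k hk)†† := by rw [DaggerCategory.dag_dag]
      _ = ((fh k hk)† ≫ (nj j ≫ (nj j)†)†)† := by rw [DaggerCategory.dag_comp]
      _ = (fh k hk ≫ (nj j ≫ (nj j)†))† := by rw [hfhsa k hk, dl_dag_proj]
      _ = fh k hk ≫ (nj j ≫ (nj j)†) := hXd
  have hcomm2' : ∀ (k : K) (hk : k ∈ Ψ) (k' : K) (hk' : k' ∈ Ψ),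
      fh k hk ≫ fh k' hk' = fh k' hk' ≫ fh k hk := by
    intro k hk k' hk'
    apply hNJ.hom_ext
    intro j
    calc (fh k hk ≫ fh k' hk') ≫ nj j
        = fh k hk ≫ (fh k' hk' ≫ nj j) := by simp only [Category.assoc]
      _ = (fh k hk ≫ nj j) ≫ (rj j k' ≫ (rj j k')†) := by
          rw [hfh k' hk' j]; simp only [Category.assoc]
      _ = nj j ≫ (rj j k ≫ (rj j k)†) ≫ (rj j k' ≫ (rj j k')†) := by
          rw [hfh k hk j]; simp only [Category.assoc]
      _ = nj j ≫ (rj j k' ≫ (rj j k')†) ≫ (rj j k ≫ (rj j k)†) := by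
          rw [hrj_indep j k hk k' hk']
      _ = (nj j ≫ (rj j k' ≫ (rj j k')†)) ≫ (rj j k ≫ (rj j k)†) := by
          simp only [Category.assoc]
      _ = (fh k' hk' ≫ nj j) ≫ (rj j k ≫ (rj j k)†) := by rw [hfh k' hk' j]
      _ = fh k' hk' ≫ (fh k hk ≫ nj j) := by rw [hfh k hk j, Category.assoc]
      _ = (fh k' hk' ≫ fh k hk) ≫ nj j := by simp only [Category.assoc]
  have ind_d : ∀ p ∈ Ω ×ˢ Ψ, ∀ p' ∈ Ω ×ˢ Ψ,
      ((nj p.1 ≫ rj p.1 p.2) ≫ (nj p.1 ≫ rj p.1 p.2)†) ≫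
        ((nj p'.1 ≫ rj p'.1 p'.2) ≫ (nj p'.1 ≫ rj p'.1 p'.2)†) =
      ((nj p'.1 ≫ rj p'.1 p'.2) ≫ (nj p'.1 ≫ rj p'.1 p'.2)†) ≫
        ((nj p.1 ≫ rj p.1 p.2) ≫ (nj p.1 ≫ rj p.1 p.2)†) := by
    rintro ⟨j, k⟩ ⟨hj, hk⟩ ⟨j', k'⟩ ⟨hj', hk'⟩
    show ((nj j ≫ rj j k) ≫ (nj j ≫ rj j k)†) ≫
        ((nj j' ≫ rj j' k') ≫ (nj j' ≫ rj j' k')†) = _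
    rw [hP' k hk j, hP' k' hk' j']
    calc (fh k hk ≫ (nj j ≫ (nj j)†)) ≫ (fh k' hk' ≫ (nj j' ≫ (nj j')†))
        = fh k hk ≫ ((nj j ≫ (nj j)†) ≫ fh k' hk') ≫ (nj j' ≫ (nj j')†) := by
          simp only [Category.assoc]
      _ = fh k hk ≫ (fh k' hk' ≫ (nj j ≫ (nj j)†)) ≫ (nj j' ≫ (nj j')†) := by
          rw [hcomm1' k' hk' j]
      _ = (fh k hk ≫ fh k' hk') ≫ (nj j ≫ (nj j)†) ≫ (nj j' ≫ (nj j')†) := by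
          simp only [Category.assoc]
      _ = (fh k' hk' ≫ fh k hk) ≫ (nj j' ≫ (nj j')†) ≫ (nj j ≫ (nj j)†) := by
          rw [hcomm2' k hk k' hk', hnj_indep j hj j' hj']
      _ = fh k' hk' ≫ ((fh k hk ≫ (nj j' ≫ (nj j')†)) ≫ (nj j ≫ (nj j)†)) := by
          simp only [Category.assoc]
      _ = fh k' hk' ≫ (((nj j' ≫ (nj j')†) ≫ fh k hk) ≫ (nj j ≫ (nj j)†)) := by
          rw [hcomm1' k hk j']
      _ = (fh k' hk' ≫ (nj j' ≫ (nj j')†)) ≫ (fh k hk ≫ (nj j ≫ (nj j)†)) := by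
          simp only [Category.assoc]
  have hNfull : IsDaggerLimit D (Ω ×ˢ Ψ) N (fun p => nj p.1 ≫ rj p.1 p.2) :=
    ⟨⟨fun {p p'} φ => cone_d φ, lim_d⟩, pi_d, ind_d⟩
  -- ===== the unitary comparison =====
  have hWI : WeaklyInitial (Ω ×ˢ Ψ) := by
    intro p
    obtain ⟨A, hA, ⟨f⟩⟩ := hΩ p.1
    obtain ⟨κ, hκ, ⟨g⟩⟩ := hΨ p.2
    exact ⟨(A, κ), ⟨hA, hκ⟩, ⟨((f, g) : (A, κ) ⟶ (p.1, p.2))⟩⟩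
  have hMD : DLim (Ω ×ˢ Ψ) (fun p : J × K => D.obj p)
      (fun {p p'} (φ : p ⟶ p') => D.map φ) M (fun p => mk p.2 ≫ lk p.2 p.1) :=
    ⟨fun {p p'} φ => cone_c φ, lim_c, pi_c, ind_c⟩
  have hND : DLim (Ω ×ˢ Ψ) (fun p : J × K => D.obj p)
      (fun {p p'} (φ : p ⟶ p') => D.map φ) N (fun p => nj p.1 ≫ rj p.1 p.2) :=
    ⟨fun {p p'} φ => cone_d φ, lim_d, pi_d, ind_d⟩
  obtain ⟨uMN, huMN, -⟩ := lim_d M (fun p => mk p.2 ≫ lk p.2 p.1) (fun {p p'} φ => cone_c φ)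
  obtain ⟨uNM, huNM, -⟩ := lim_c N (fun p => nj p.1 ≫ rj p.1 p.2) (fun {p p'} φ => cone_d φ)
  have huv : uMN ≫ uNM = 𝟙 M := by
    apply hMD.hom_ext
    intro p
    rw [Category.assoc, huNM p, huMN p, Category.id_comp]
  have hvu : uNM ≫ uMN = 𝟙 N := by
    apply hND.hom_ext
    intro p
    rw [Category.assoc, huMN p, huNM p, Category.id_comp]
  have hudag : uMN† = uNM :=
    lemKey (σ := fun p : J × K => 𝟙 (D.obj p)) hWI hMD hND
      (fun {p p'} φ => by rw [DaggerCategory.dag_id, DaggerCategory.dag_id,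
        Category.comp_id, Category.id_comp])
      (fun p => by rw [huMN p, Category.comp_id])
      (fun p => by rw [huNM p, DaggerCategory.dag_id, Category.comp_id])
  refine ⟨hMfull, hNfull, uMN, ⟨?_, ?_⟩, fun p => huMN p⟩
  · rw [hudag]; exact huv
  · rw [hudag]; exact hvu
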